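/- arXiv:2202.06150 — 3 statements merged into one kernel-verified Lean document; each statement's English description precedes it below -/
import Mathlib

section
/- There exist a convex compact set X ⊆ ℝ² with diameter in [2,4], and for every G > 1 a convex function f : X → ℝ that is 0-smooth (affine), takes values in [−1,1] on X, yet has Lipschitz constant exactly G. In particular, a β-smooth convex function bounded in [−1,1] on a domain of diameter in [2,4] need not be (2β+1)-Lipschitz. -/
noncomputable def ee (x y : ℝ) : EuclideanSpace ℝ (Fin 2) :=
  (WithLp.equiv 2 (Fin 2 → ℝ)).symm ![x, y]

lemma ee0 (x y : ℝ) : ee x y 0 = x := by simp [ee]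
lemma ee1 (x y : ℝ) : ee x y 1 = y := by simp [ee]

lemma dist2 (z w : EuclideanSpace ℝ (Fin 2)) :
    dist z w = Real.sqrt ((z 0 - w 0)^2 + (z 1 - w 1)^2) := by
  rw [EuclideanSpace.dist_eq, Fin.sum_univ_two]
  simp [Real.dist_eq, sq_abs]

lemma abs1_le_dist (z w : EuclideanSpace ℝ (Fin 2)) : |z 1 - w 1| ≤ dist z w := by
  rw [dist2]
  calc |z 1 - w 1| = Real.sqrt ((z 1 - w 1)^2) := (Real.sqrt_sq_eq_abs _).symm
    _ ≤ _ := Real.sqrt_le_sqrt (by nlinarith [sq_nonneg (z 0 - w 0)])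

/-- For every `G > 1` there is a convex compact set `X ⊆ ℝ²` of diameter
in `[2,4]` and a convex, affine (hence `0`-smooth) function `f` taking values in
`[-1,1]` on `X`, whose Lipschitz constant on `X` is exactly `G`. In particular such
an `f` is not `(2·0+1) = 1`-Lipschitz, so a `β`-smooth convex function bounded in
`[-1,1]` on a domain of diameter in `[2,4]` need not be `(2β+1)`-Lipschitz. -/
theorem stmt1 :
    ∀ G : ℝ, 1 < G →
      ∃ (X : Set (EuclideanSpace ℝ (Fin 2))) (f : EuclideanSpace ℝ (Fin 2) → ℝ),
        Convex ℝ X ∧ IsCompact X ∧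
        2 ≤ Metric.diam X ∧ Metric.diam X ≤ 4 ∧
        ConvexOn ℝ X f ∧
        (∃ (a : EuclideanSpace ℝ (Fin 2)) (c : ℝ), ∀ z, f z = (inner ℝ a z : ℝ) + c) ∧
        (∀ z ∈ X, f z ∈ Set.Icc (-1 : ℝ) 1) ∧
        LipschitzOnWith (Real.toNNReal G) f X ∧
        (∀ L : NNReal, LipschitzOnWith L f X → G ≤ (L : ℝ)) ∧
        ¬ LipschitzOnWith ((2 * 0 + 1 : ℕ) : NNReal) f X := by
  intro G hG
  have hG0 : (0:ℝ) < G := lt_trans one_pos hG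
  have hGinv : (0:ℝ) < 1/G := by positivity
  have hGinv1 : 1/G ≤ 1 := by
    rw [div_le_one hG0]; linarith
  set X : Set (EuclideanSpace ℝ (Fin 2)) :=
    {z | z 0 ∈ Set.Icc (-1:ℝ) 1 ∧ z 1 ∈ Set.Icc (-(1/G)) (1/G)} with hX
  set f : EuclideanSpace ℝ (Fin 2) → ℝ := fun z => G * z 1 with hf
  -- membership of special points
  have hmem : ∀ x y : ℝ, x ∈ Set.Icc (-1:ℝ) 1 → y ∈ Set.Icc (-(1/G)) (1/G) → ee x y ∈ X := by
    intro x y hx hy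
    constructor <;> simp only [ee0, ee1] <;> assumption
  have hp1 : ee (-1) 0 ∈ X := hmem _ _ (by constructor <;> norm_num) ⟨by linarith, by linarith⟩
  have hp2 : ee 1 0 ∈ X := hmem _ _ (by constructor <;> norm_num) ⟨by linarith, by linarith⟩
  have hq1 : ee 0 (1/G) ∈ X := hmem _ _ (by constructor <;> norm_num)
    ⟨by linarith, le_refl _⟩
  have hq2 : ee 0 (-(1/G)) ∈ X := hmem _ _ (by constructor <;> norm_num)
    ⟨le_refl _, by linarith⟩
  -- closedness, compactness
  have hc0 : Continuous fun z : EuclideanSpace ℝ (Fin 2) => z 0 :=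
    (EuclideanSpace.proj (0 : Fin 2) (𝕜 := ℝ)).continuous
  have hc1 : Continuous fun z : EuclideanSpace ℝ (Fin 2) => z 1 :=
    (EuclideanSpace.proj (1 : Fin 2) (𝕜 := ℝ)).continuous
  have hclosed : IsClosed X := by
    have : X = (fun z : EuclideanSpace ℝ (Fin 2) => z 0) ⁻¹' Set.Icc (-1:ℝ) 1 ∩
        (fun z : EuclideanSpace ℝ (Fin 2) => z 1) ⁻¹' Set.Icc (-(1/G)) (1/G) := rfl
    rw [this]
    exact (isClosed_Icc.preimage hc0).inter (isClosed_Icc.preimage hc1)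
  have hbdd : X ⊆ Metric.closedBall (ee 0 0) 2 := by
    intro z hz
    simp only [Metric.mem_closedBall]
    rw [dist2, ee0, ee1]
    have h0 := hz.1
    have h1 := hz.2
    simp only [Set.mem_Icc] at h0 h1
    have : (z 0 - 0)^2 + (z 1 - 0)^2 ≤ 4 := by nlinarith
    calc Real.sqrt ((z 0 - 0)^2 + (z 1 - 0)^2) ≤ Real.sqrt 4 := Real.sqrt_le_sqrt this
      _ = 2 := by rw [show (4:ℝ) = 2^2 by norm_num, Real.sqrt_sq (by norm_num)]
  have hcompact : IsCompact X :=
    Metric.isCompact_of_isClosed_isBounded hclosed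
      (Metric.isBounded_closedBall.subset hbdd)
  -- convexity
  have hconv : Convex ℝ X := by
    intro z hz w hw a b ha hb hab
    constructor
    · have : (a • z + b • w) 0 = a * z 0 + b * w 0 := rfl
      rw [this]
      exact (convex_Icc (-1:ℝ) 1) hz.1 hw.1 ha hb hab
    · have : (a • z + b • w) 1 = a * z 1 + b * w 1 := rfl
      rw [this]
      exact (convex_Icc (-(1/G)) (1/G)) hz.2 hw.2 ha hb hab
  -- distances between special points
  have hd12 : dist (ee (-1) 0) (ee 1 0) = 2 := by
    rw [dist2]; simp only [ee0, ee1]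
    rw [show ((-1:ℝ) - 1)^2 + ((0:ℝ)-0)^2 = 2^2 by norm_num, Real.sqrt_sq (by norm_num)]
  have hdq : dist (ee 0 (1/G)) (ee 0 (-(1/G))) = 2/G := by
    rw [dist2]; simp only [ee0, ee1]
    rw [show ((0:ℝ)-0)^2 + (1/G - -(1/G))^2 = (2/G)^2 by ring,
      Real.sqrt_sq (by positivity)]
  have hlow : ∀ L : NNReal, LipschitzOnWith L f X → G ≤ (L : ℝ) := by
    intro L hL
    have := hL.dist_le_mul _ hq1 _ hq2
    rw [hdq] at this
    have hfv : dist (f (ee 0 (1/G))) (f (ee 0 (-(1/G)))) = 2 := by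
      simp only [hf, ee1, Real.dist_eq]
      rw [show G * (1/G) - G * (-(1/G)) = 2 * (G * (1/G)) by ring,
        mul_one_div_cancel hG0.ne']
      norm_num
    rw [hfv] at this
    have hL2 : 2 ≤ (L:ℝ) * (2/G) := this
    have h4 : (L:ℝ) * (2/G) * G = (L:ℝ) * 2 := by field_simp
    linarith [mul_le_mul_of_nonneg_right hL2 hG0.le]
  refine ⟨X, f, hconv, hcompact, ?_, ?_, ?_, ?_, ?_, ?_, hlow, ?_⟩
  · calc (2:ℝ) = dist (ee (-1) 0) (ee 1 0) := hd12.symm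
      _ ≤ Metric.diam X := Metric.dist_le_diam_of_mem
        (Metric.isBounded_closedBall.subset hbdd) hp1 hp2
  · refine Metric.diam_le_of_forall_dist_le (by norm_num) ?_
    intro z hz w hw
    rw [dist2]
    have h0z := hz.1; have h1z := hz.2; have h0w := hw.1; have h1w := hw.2
    simp only [Set.mem_Icc] at h0z h1z h0w h1w
    have : (z 0 - w 0)^2 + (z 1 - w 1)^2 ≤ 16 := by nlinarith
    calc Real.sqrt ((z 0 - w 0)^2 + (z 1 - w 1)^2) ≤ Real.sqrt 16 := Real.sqrt_le_sqrt this
      _ = 4 := by rw [show (16:ℝ) = 4^2 by norm_num, Real.sqrt_sq (by norm_num)]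
  · refine ⟨hconv, ?_⟩
    intro z _ w _ a b ha hb hab
    have : (a • z + b • w) 1 = a * z 1 + b * w 1 := rfl
    simp only [hf, smul_eq_mul, this]
    exact le_of_eq (by ring)
  · refine ⟨(WithLp.equiv 2 (Fin 2 → ℝ)).symm ![0, G], 0, ?_⟩
    intro z
    simp [hf, EuclideanSpace.inner_eq_star_dotProduct]
    exact mul_comm _ _
  · intro z hz
    have h1 := hz.2
    simp only [Set.mem_Icc] at h1 ⊢
    constructor
    · have : G * (-(1/G)) ≤ G * z 1 := by nlinarith [h1.1]
      have hGg : G * (-(1/G)) = -1 := by field_simp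
      simp only [hf]; linarith [hGg ▸ this]
    · have : G * z 1 ≤ G * (1/G) := by nlinarith [h1.2]
      have hGg : G * (1/G) = 1 := by field_simp
      simp only [hf]; linarith [hGg ▸ this]
  · apply LipschitzOnWith.of_dist_le_mul
    intro z _ w _
    rw [Real.coe_toNNReal _ hG0.le]
    have : dist (f z) (f w) = G * |z 1 - w 1| := by
      simp only [hf, Real.dist_eq, ← mul_sub, abs_mul, abs_of_pos hG0]
    rw [this]
    exact mul_le_mul_of_nonneg_left (abs1_le_dist z w) hG0.le
  · intro h
    have := hlow _ h
    norm_num at this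
    linarith
end

section
/- Fix d ∈ ℕ, constants β ≥ 0, ν ≥ 1, λ₀ > 0, and a nonnegative sequence σ₁,…,σ_T. Suppose for each t the coefficient λ_t ∈ (0,1) satisfies the fixed-point equation λ_t = d√(β+1) / √(σ_{1:t} + λ_{0:t}), where σ_{1:t} = σ₁+⋯+σ_t and λ_{0:t} = λ₀+λ₁+⋯+λ_t. Define B({λ_s}_{s=1}^t) = λ_{1:t} + Σ_{τ=1}^t d√(β+1)/√(σ_{1:τ} + λ_{0:τ}). Then for all t, B({λ_s}_{s=1}^t) ≤ 2 · min over all nonnegative sequences {λ*_s}_{s=1}^t of B({λ*_s}_{s=1}^t) (where in B({λ*_s}) the same λ₀ is used, i.e. λ*_{0:τ} = λ₀ + λ*₁ + ⋯ + λ*_τ). -/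
open Finset

/-- The objective `B({λ_s}_{s=1}^t) = λ_{1:t} + Σ_{τ=1}^t d√(β+1)/√(σ_{1:τ} + λ_{0:τ})`,
where `λ_{0:τ} = λ₀ + λ₁ + ⋯ + λ_τ`. -/
noncomputable def smoothObjB (d : ℕ) (β lam0 : ℝ) (σ : ℕ → ℝ) (lam : ℕ → ℝ) (t : ℕ) : ℝ :=
  (∑ s ∈ Finset.Icc 1 t, lam s) +
    ∑ τ ∈ Finset.Icc 1 t,
      (d : ℝ) * Real.sqrt (β + 1) /
        Real.sqrt ((∑ k ∈ Finset.Icc 1 τ, σ k) + (lam0 + ∑ k ∈ Finset.Icc 1 τ, lam k))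

/-- if each `λ_t ∈ (0,1)` solves the fixed-point equation
`λ_t = d√(β+1)/√(σ_{1:t} + λ_{0:t})`, then for all `t`, the sequence `{λ_s}` is a
2-approximation of the best nonnegative sequence for the objective `B`. -/
theorem stmt2 (d T : ℕ) (β lam0 : ℝ) (hβ : 0 ≤ β) (hlam0 : 0 < lam0)
    (σ lam : ℕ → ℝ) (hσ : ∀ t, 1 ≤ t → t ≤ T → 0 ≤ σ t)
    (hlam : ∀ t, 1 ≤ t → t ≤ T → lam t ∈ Set.Ioo (0 : ℝ) 1 ∧
      lam t = (d : ℝ) * Real.sqrt (β + 1) /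
        Real.sqrt ((∑ k ∈ Finset.Icc 1 t, σ k) + (lam0 + ∑ k ∈ Finset.Icc 1 t, lam k))) :
    ∀ t, 1 ≤ t → t ≤ T →
      ∀ μ : ℕ → ℝ, (∀ s, 1 ≤ s → s ≤ t → 0 ≤ μ s) →
        smoothObjB d β lam0 σ lam t ≤ 2 * smoothObjB d β lam0 σ μ t := by
  intro t ht1 htT μ hμ
  set c : ℝ := (d : ℝ) * Real.sqrt (β + 1) with hc
  have hcnn : 0 ≤ c := mul_nonneg (Nat.cast_nonneg d) (Real.sqrt_nonneg _)
  -- abbreviations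
  have hSnn : ∀ s, s ≤ t → 0 ≤ ∑ k ∈ Finset.Icc 1 s, σ k := by
    intro s hs
    refine Finset.sum_nonneg fun k hk => ?_
    rw [Finset.mem_Icc] at hk
    exact hσ k hk.1 (by omega)
  have hMnn : ∀ s, s ≤ t → 0 ≤ ∑ k ∈ Finset.Icc 1 s, μ k := by
    intro s hs
    refine Finset.sum_nonneg fun k hk => ?_
    rw [Finset.mem_Icc] at hk
    exact hμ k hk.1 (by omega)
  have hdenμ : ∀ s, s ≤ t →
      0 < (∑ k ∈ Finset.Icc 1 s, σ k) + (lam0 + ∑ k ∈ Finset.Icc 1 s, μ k) := by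
    intro s hs
    have := hSnn s hs
    have := hMnn s hs
    linarith
  have hLnn : ∀ s, s ≤ t → 0 ≤ ∑ k ∈ Finset.Icc 1 s, lam k := by
    intro s hs
    refine Finset.sum_nonneg fun k hk => ?_
    rw [Finset.mem_Icc] at hk
    exact le_of_lt (hlam k hk.1 (by omega)).1.1
  have hCnn : ∀ s, s ≤ t →
      0 ≤ ∑ τ ∈ Finset.Icc 1 s,
          c / Real.sqrt ((∑ k ∈ Finset.Icc 1 τ, σ k) + (lam0 + ∑ k ∈ Finset.Icc 1 τ, μ k)) := by
    intro s hs
    refine Finset.sum_nonneg fun τ hτ => ?_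
    exact div_nonneg hcnn (Real.sqrt_nonneg _)
  -- key induction
  have key : ∀ s, s ≤ t →
      (∑ k ∈ Finset.Icc 1 s, lam k) ≤ (∑ k ∈ Finset.Icc 1 s, μ k) +
        ∑ τ ∈ Finset.Icc 1 s,
          c / Real.sqrt ((∑ k ∈ Finset.Icc 1 τ, σ k) + (lam0 + ∑ k ∈ Finset.Icc 1 τ, μ k)) := by
    intro s hs
    induction s with
    | zero => simp
    | succ n ih =>
      have hn : n ≤ t := by omega
      have ih' := ih hn
      have h1 : (1 : ℕ) ≤ n + 1 := by omega
      rw [Finset.sum_Icc_succ_top h1, Finset.sum_Icc_succ_top h1, Finset.sum_Icc_succ_top h1]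
      rcases le_or_gt (∑ k ∈ Finset.Icc 1 (n+1), lam k) (∑ k ∈ Finset.Icc 1 (n+1), μ k) with h | h
      · rw [Finset.sum_Icc_succ_top h1, Finset.sum_Icc_succ_top h1] at h
        have hC := hCnn n hn
        have hterm : 0 ≤ c / Real.sqrt ((∑ k ∈ Finset.Icc 1 (n+1), σ k) +
            (lam0 + ∑ k ∈ Finset.Icc 1 (n+1), μ k)) :=
          div_nonneg hcnn (Real.sqrt_nonneg _)
        linarith
      · -- μ sum < lam sum at n+1
        have heq := (hlam (n+1) h1 (by omega)).2
        have hdL : (∑ k ∈ Finset.Icc 1 (n+1), σ k) + (lam0 + ∑ k ∈ Finset.Icc 1 (n+1), lam k) > 0 := by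
          have := hSnn (n+1) hs
          have := hLnn (n+1) hs
          linarith
        have hdM := hdenμ (n+1) hs
        have hmono : c / Real.sqrt ((∑ k ∈ Finset.Icc 1 (n+1), σ k) +
              (lam0 + ∑ k ∈ Finset.Icc 1 (n+1), lam k)) ≤
            c / Real.sqrt ((∑ k ∈ Finset.Icc 1 (n+1), σ k) +
              (lam0 + ∑ k ∈ Finset.Icc 1 (n+1), μ k)) := by
          apply div_le_div_of_nonneg_left hcnn (Real.sqrt_pos.2 hdM)
          apply Real.sqrt_le_sqrt
          linarith
        have hμn : 0 ≤ μ (n+1) := hμ (n+1) h1 (by omega)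
        calc (∑ k ∈ Finset.Icc 1 n, lam k) + lam (n+1)
            ≤ ((∑ k ∈ Finset.Icc 1 n, μ k) +
                ∑ τ ∈ Finset.Icc 1 n, c / Real.sqrt ((∑ k ∈ Finset.Icc 1 τ, σ k) +
                  (lam0 + ∑ k ∈ Finset.Icc 1 τ, μ k))) +
              c / Real.sqrt ((∑ k ∈ Finset.Icc 1 (n+1), σ k) +
                (lam0 + ∑ k ∈ Finset.Icc 1 (n+1), μ k)) := by
              rw [heq]
              have := add_le_add ih' hmono
              linarith
          _ ≤ _ := by linarith
  -- conclude
  have hBlam : smoothObjB d β lam0 σ lam t = 2 * ∑ k ∈ Finset.Icc 1 t, lam k := by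
    unfold smoothObjB
    rw [two_mul]
    congr 1
    refine Finset.sum_congr rfl fun τ hτ => ?_
    rw [Finset.mem_Icc] at hτ
    exact ((hlam τ hτ.1 (by omega)).2).symm
  have hBμ : smoothObjB d β lam0 σ μ t = (∑ k ∈ Finset.Icc 1 t, μ k) +
      ∑ τ ∈ Finset.Icc 1 t,
        c / Real.sqrt ((∑ k ∈ Finset.Icc 1 τ, σ k) + (lam0 + ∑ k ∈ Finset.Icc 1 τ, μ k)) := rfl
  rw [hBlam, hBμ]
  have := key t le_rfl
  linarith
end

section
/- Let X ⊆ ℝ^d be closed convex with nonempty interior, let R_t : X → ℝ be convex regularizers and f_t : X → ℝ convex differentiable online losses. Define F_t(x) = R_t(x) + Σ_{s=1}^{t−1} f_s(x) and let x_t ∈ argmin_{x∈X} F_t(x). Then for any u ∈ X: Σ_{t=1}^T f_t(x_t) − Σ_{t=1}^T f_t(u) ≤ R_{T+1}(u) − R_1(x_1) + Σ_{t=1}^T ⟨∇f_t(x_t), x_t − x_{t+1}⟩ − Σ_{t=1}^T D_{F_t+f_t}(x_{t+1}, x_t) + Σ_{t=1}^T (R_t(x_{t+1}) − R_{t+1}(x_{t+1})).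 -/
open Finset

/-- the standard FTRL regret bound. With `F_t = R_t + Σ_{s=1}^{t-1} f_s`,
`x_t ∈ argmin_{x ∈ X} F_t(x)` (with first-order optimality), for any `u ∈ X`:
`Σ f_t(x_t) − Σ f_t(u) ≤ R_{T+1}(u) − R_1(x_1) + Σ ⟨∇f_t(x_t), x_t − x_{t+1}⟩
  − Σ D_{F_t+f_t}(x_{t+1}, x_t) + Σ (R_t(x_{t+1}) − R_{t+1}(x_{t+1}))`,
where the Bregman divergence `D_ψ(u,v) = ψ(u) − ψ(v) − ⟨∇ψ(v), u−v⟩` is written out. -/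
theorem stmt6 {d : ℕ} (T : ℕ) (X : Set (EuclideanSpace ℝ (Fin d)))
    (hXc : IsClosed X) (hXconv : Convex ℝ X) (hXint : (interior X).Nonempty)
    (R f F : ℕ → EuclideanSpace ℝ (Fin d) → ℝ)
    (gf gF : ℕ → EuclideanSpace ℝ (Fin d) → EuclideanSpace ℝ (Fin d))
    (hF : ∀ t x, F t x = R t x + ∑ s ∈ Finset.Icc 1 (t - 1), f s x)
    (hRconv : ∀ t, ConvexOn ℝ X (R t))
    (hfconv : ∀ t, ConvexOn ℝ X (f t))
    (hgf : ∀ t, ∀ y ∈ X, HasGradientAt (f t) (gf t y) y)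
    (x : ℕ → EuclideanSpace ℝ (Fin d)) (hx : ∀ t, x t ∈ X)
    (hmin : ∀ t, ∀ z ∈ X, F t (x t) ≤ F t z)
    (hgF : ∀ t, HasGradientAt (F t) (gF t (x t)) (x t))
    (hopt : ∀ t, ∀ z ∈ X, 0 ≤ (inner ℝ (gF t (x t)) (z - x t) : ℝ))
    (u : EuclideanSpace ℝ (Fin d)) (hu : u ∈ X) :
    (∑ t ∈ Finset.Icc 1 T, f t (x t)) - (∑ t ∈ Finset.Icc 1 T, f t u) ≤
      R (T + 1) u - R 1 (x 1)
      + (∑ t ∈ Finset.Icc 1 T, (inner ℝ (gf t (x t)) (x t - x (t + 1)) : ℝ))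
      - (∑ t ∈ Finset.Icc 1 T,
          ((F t (x (t + 1)) + f t (x (t + 1))) - (F t (x t) + f t (x t))
            - (inner ℝ (gF t (x t) + gf t (x t)) (x (t + 1) - x t) : ℝ)))
      + ∑ t ∈ Finset.Icc 1 T, (R t (x (t + 1)) - R (t + 1) (x (t + 1))) := by
  have htel : ∑ t ∈ Finset.Icc 1 T, (F t (x t) - F (t + 1) (x (t + 1)))
      = F 1 (x 1) - F (T + 1) (x (T + 1)) := by
    induction T with
    | zero => simp
    | succ n ih => rw [Finset.sum_Icc_succ_top (by omega : 1 ≤ n + 1), ih]; ring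
  -- pointwise identity for the summands
  have key : ∀ t ∈ Finset.Icc 1 T,
      (inner ℝ (gf t (x t)) (x t - x (t + 1)) : ℝ)
        - ((F t (x (t + 1)) + f t (x (t + 1))) - (F t (x t) + f t (x t))
            - (inner ℝ (gF t (x t) + gf t (x t)) (x (t + 1) - x t) : ℝ))
        + (R t (x (t + 1)) - R (t + 1) (x (t + 1)))
      = f t (x t) + (F t (x t) - F (t + 1) (x (t + 1)))
        + (inner ℝ (gF t (x t)) (x (t + 1) - x t) : ℝ) := by
    intro t ht
    obtain ⟨ht1, _⟩ := Finset.mem_Icc.mp ht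
    have hFt1 : F (t + 1) (x (t + 1)) =
        F t (x (t + 1)) + f t (x (t + 1)) + R (t + 1) (x (t + 1)) - R t (x (t + 1)) := by
      rw [hF, hF]
      have h1 : Finset.Icc 1 (t + 1 - 1) = Finset.Icc 1 (t - 1 + 1) := by congr 1; omega
      rw [h1, Finset.sum_Icc_succ_top (by omega : 1 ≤ t - 1 + 1)]
      have h2 : t - 1 + 1 = t := by omega
      rw [h2]; ring
    have hinner : (inner ℝ (gF t (x t) + gf t (x t)) (x (t + 1) - x t) : ℝ)
        = inner ℝ (gF t (x t)) (x (t + 1) - x t) + inner ℝ (gf t (x t)) (x (t + 1) - x t) :=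
      inner_add_left _ _ _
    have hinner2 : (inner ℝ (gf t (x t)) (x t - x (t + 1)) : ℝ)
        = - inner ℝ (gf t (x t)) (x (t + 1) - x t) := by
      rw [show x t - x (t + 1) = -(x (t + 1) - x t) from (neg_sub _ _).symm, inner_neg_right]
    rw [hinner, hinner2]
    linarith [hFt1]
  have E1 : (∑ t ∈ Finset.Icc 1 T, (inner ℝ (gf t (x t)) (x t - x (t + 1)) : ℝ))
      - (∑ t ∈ Finset.Icc 1 T,
          ((F t (x (t + 1)) + f t (x (t + 1))) - (F t (x t) + f t (x t))
            - (inner ℝ (gF t (x t) + gf t (x t)) (x (t + 1) - x t) : ℝ)))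
      + ∑ t ∈ Finset.Icc 1 T, (R t (x (t + 1)) - R (t + 1) (x (t + 1)))
      = (∑ t ∈ Finset.Icc 1 T, f t (x t))
        + (∑ t ∈ Finset.Icc 1 T, (F t (x t) - F (t + 1) (x (t + 1))))
        + ∑ t ∈ Finset.Icc 1 T, (inner ℝ (gF t (x t)) (x (t + 1) - x t) : ℝ) := by
    rw [← Finset.sum_sub_distrib, ← Finset.sum_add_distrib, ← Finset.sum_add_distrib,
      ← Finset.sum_add_distrib]
    exact Finset.sum_congr rfl key
  have hA : 0 ≤ ∑ t ∈ Finset.Icc 1 T, (inner ℝ (gF t (x t)) (x (t + 1) - x t) : ℝ) :=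
    Finset.sum_nonneg fun t _ => hopt t _ (hx _)
  have hF1 : F 1 (x 1) = R 1 (x 1) := by rw [hF]; simp
  have hFT : F (T + 1) u = R (T + 1) u + ∑ t ∈ Finset.Icc 1 T, f t u := by
    rw [hF]; simp
  have hmain : F (T + 1) (x (T + 1)) ≤ F (T + 1) u := hmin (T + 1) u hu
  linarith [E1, htel, hA, hF1, hFT, hmain]
end
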